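/- arXiv:2403.09546 — 5 statements merged into one kernel-verified Lean document; each statement's English description precedes it below -/
import Mathlib

section
/- Let X be a metric space and C ⊂ X × X. Then C is cyclically monotonic if and only if C admits an extremal function, i.e., a 1-Lipschitz function f : X → ℝ with f(x) - f(y) = d(x,y) for all (x,y) ∈ C. -/
/-- A set `C ⊆ X × X` is `d`-cyclically monotonic (for a cost `d`) if for all
`(x_1,y_1), …, (x_n,y_n) ∈ C` and every permutation `σ` of `{1,…,n}`,
`Σ d(x_k,y_k) ≤ Σ d(x_k, y_{σ(k)})`. -/
def IsCyclicallyMonotonic {X : Type*} (d : X → X → ℝ) (C : Set (X × X)) : Prop :=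
  ∀ (n : ℕ) (p : Fin n → X × X), (∀ i, p i ∈ C) → ∀ σ : Equiv.Perm (Fin n),
    ∑ i, d (p i).1 (p i).2 ≤ ∑ i, d (p i).1 (p (σ i)).2

private lemma fin_succ_sub_one (n : ℕ) (j : Fin n) : (j.succ : Fin (n+1)) - 1 = j.castSucc := by
  have hn : 0 < n := j.pos
  have h1 : 1 % (n+1) = 1 := Nat.mod_eq_of_lt (by omega)
  simp only [Fin.ext_iff, Fin.sub_def, Fin.val_one', Fin.val_succ, Fin.coe_castSucc, h1]
  rw [show n + 1 - 1 + (j.val + 1) = j.val + (n+1) by omega, Nat.add_mod_right]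
  exact Nat.mod_eq_of_lt (by omega)

private lemma fin_zero_sub_one (n : ℕ) : (0 : Fin (n+1)) - 1 = Fin.last n := by
  simp only [Fin.ext_iff, Fin.sub_def, Fin.val_zero, Fin.val_one', Fin.val_last]
  rcases Nat.eq_zero_or_pos n with h | h
  · subst h; rfl
  · rw [Nat.mod_eq_of_lt (by omega : 1 < n+1)]
    rw [show n + 1 - 1 + 0 = n by omega]
    exact Nat.mod_eq_of_lt (by omega)

/-- Cost of a chain `q 1, …, q n` based at `(q 0).2`, ending at `x`. -/
noncomputable def chainCost {X : Type*} [MetricSpace X] {n : ℕ}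
    (q : Fin (n+1) → X × X) (x : X) : ℝ :=
  (∑ i : Fin n,
      (dist (q i.castSucc).2 (q i.succ).1 - dist (q i.succ).1 (q i.succ).2))
    + dist (q (Fin.last n)).2 x

lemma chainCost_lower {X : Type*} [MetricSpace X] {C : Set (X × X)}
    (hC : IsCyclicallyMonotonic dist C) {n : ℕ} {q : Fin (n+1) → X × X}
    (hq : ∀ i, q i ∈ C) (x : X) :
    dist (q 0).1 (q 0).2 - dist (q 0).1 x ≤ chainCost q x := by
  have h := hC (n+1) q hq (Equiv.subRight 1)
  simp only [Equiv.subRight_apply] at h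
  rw [Fin.sum_univ_succ, Fin.sum_univ_succ] at h
  rw [fin_zero_sub_one] at h
  have hrw : ∀ j : Fin n, dist (q j.succ).1 (q (j.succ - 1)).2
      = dist (q j.castSucc).2 (q j.succ).1 := by
    intro j; rw [fin_succ_sub_one, dist_comm]
  rw [Finset.sum_congr rfl (fun j _ => hrw j)] at h
  unfold chainCost
  rw [Finset.sum_sub_distrib]
  have htri := dist_triangle (q 0).1 x (q (Fin.last n)).2
  have htri2 := dist_comm x (q (Fin.last n)).2
  linarith

lemma chainCost_snoc {X : Type*} [MetricSpace X] {n : ℕ}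
    (q : Fin (n+1) → X × X) (p : X × X) (x : X) :
    chainCost (Fin.snoc q p) x = chainCost q p.1 - dist p.1 p.2 + dist p.2 x := by
  unfold chainCost
  rw [Fin.sum_univ_castSucc]
  have h1 : ∀ j : Fin n,
      (Fin.snoc q p : Fin (n+2) → X × X) j.castSucc.castSucc = q j.castSucc := by
    intro j; exact Fin.snoc_castSucc ..
  have h2 : ∀ j : Fin n,
      (Fin.snoc q p : Fin (n+2) → X × X) j.castSucc.succ = q j.succ := by
    intro j; rw [Fin.succ_castSucc]; exact Fin.snoc_castSucc ..
  have h3 : (Fin.snoc q p : Fin (n+2) → X × X) (Fin.last n).castSucc = q (Fin.last n) :=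
    Fin.snoc_castSucc ..
  have h4 : (Fin.snoc q p : Fin (n+2) → X × X) (Fin.last n).succ = p := by
    rw [Fin.succ_last]; exact Fin.snoc_last ..
  have h5 : (Fin.snoc q p : Fin (n+2) → X × X) (Fin.last (n+1)) = p := Fin.snoc_last ..
  rw [Finset.sum_congr rfl (fun j _ => by rw [h1 j, h2 j]), h3, h4, h5]
  ring

/-- Let `X` be a metric space and `C ⊆ X × X`.  Then `C` is cyclically monotonic if and
only if `C` admits an extremal function, i.e. a `1`-Lipschitz function `f : X → ℝ` with
`f(x) - f(y) = d(x,y)` for all `(x,y) ∈ C`. -/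
theorem cyclicallyMonotonic_iff_extremal {X : Type*} [MetricSpace X] (C : Set (X × X)) :
    IsCyclicallyMonotonic dist C ↔
      ∃ f : X → ℝ, LipschitzWith 1 f ∧ ∀ p ∈ C, f p.1 - f p.2 = dist p.1 p.2 := by
  constructor
  · intro hC
    rcases C.eq_empty_or_nonempty with rfl | ⟨p₀, hp₀⟩
    · exact ⟨0, (LipschitzWith.const 0).weaken zero_le_one, fun p hp => absurd hp (Set.notMem_empty p)⟩
    set S : X → Set ℝ := fun x =>
      {r | ∃ (n : ℕ) (q : Fin (n+1) → X × X),
        q 0 = p₀ ∧ (∀ i, q i ∈ C) ∧ chainCost q x = r} with hS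
    have hne : ∀ x, (S x).Nonempty := fun x =>
      ⟨chainCost (fun _ : Fin 1 => p₀) x, 0, fun _ => p₀, rfl, fun _ => hp₀, rfl⟩
    have hbdd : ∀ x, BddBelow (S x) := by
      intro x
      refine ⟨dist p₀.1 p₀.2 - dist p₀.1 x, ?_⟩
      rintro r ⟨n, q, hq0, hq, rfl⟩
      have := chainCost_lower hC hq x
      rw [hq0] at this
      exact this
    set f : X → ℝ := fun x => sInf (S x) with hf
    have hle : ∀ x y, f x ≤ f y + dist x y := by
      intro x y
      have : f x - dist x y ≤ f y := by
        apply le_csInf (hne y)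
        rintro r ⟨n, q, hq0, hq, rfl⟩
        have hx : f x ≤ chainCost q x := csInf_le (hbdd x) ⟨n, q, hq0, hq, rfl⟩
        have : chainCost q x ≤ chainCost q y + dist x y := by
          unfold chainCost
          have := dist_triangle (q (Fin.last n)).2 y x
          have h2 := dist_comm y x
          linarith
        linarith
      linarith
    have hlip : LipschitzWith 1 f := LipschitzWith.of_le_add hle
    refine ⟨f, hlip, ?_⟩
    rintro ⟨a, b⟩ hab
    have hub : f b ≤ f a - dist a b := by
      have : f b + dist a b ≤ f a := by
        apply le_csInf (hne a)
        rintro r ⟨n, q, hq0, hq, rfl⟩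
        have hmem : chainCost q a - dist a b ∈ S b := by
          refine ⟨n+1, Fin.snoc q (a, b), ?_, ?_, ?_⟩
          · rw [show (0 : Fin (n+2)) = (0 : Fin (n+1)).castSucc by simp,
              Fin.snoc_castSucc, hq0]
          · intro i
            refine Fin.lastCases ?_ ?_ i
            · rw [Fin.snoc_last]; exact hab
            · intro j; rw [Fin.snoc_castSucc]; exact hq j
          · rw [chainCost_snoc]; simp
        have := csInf_le (hbdd b) hmem
        linarith
      linarith
    have hlb : f a - f b ≤ dist a b := by have := hle a b; linarith
    simp only []
    linarith [le_of_eq (rfl : f b = f b), hub]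
  · rintro ⟨f, hf, hext⟩
    intro n p hp σ
    have h1 : ∑ i, dist (p i).1 (p i).2 = ∑ i, (f (p i).1 - f (p i).2) := by
      apply Finset.sum_congr rfl
      intro i _
      exact (hext (p i) (hp i)).symm
    have h2 : ∑ i, (f (p i).1 - f (p (σ i)).2) ≤ ∑ i, dist (p i).1 (p (σ i)).2 := by
      apply Finset.sum_le_sum
      intro i _
      have := hf.dist_le_mul (p i).1 (p (σ i)).2
      rw [NNReal.coe_one, one_mul, Real.dist_eq] at this
      calc f (p i).1 - f (p (σ i)).2 ≤ |f (p i).1 - f (p (σ i)).2| := le_abs_self _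
        _ ≤ dist (p i).1 (p (σ i)).2 := this
    have h3 : ∑ i, f (p (σ i)).2 = ∑ i, f (p i).2 := by
      exact Equiv.sum_comp σ (fun i => f (p i).2)
    rw [h1]
    rw [Finset.sum_sub_distrib] at *
    linarith
end

section
/- There exists a family (I_{k,n})_{k,n ∈ ℕ} of infinite subsets of ℕ such that: (i) k < min I_{k,n} for all k,n; (ii) for each fixed k, the sets (I_{k,n})_n are pairwise disjoint; (iii) if k ≤ k' and I_{k,n} ∩ I_{k',n'} ≠ ∅ then I_{k',n'} ⊆ I_{k,n}; (iv) if p ∈ I_{k,n} then I_{p,q} ⊆ I_{k,n} for every q ∈ ℕ. -/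
/-!
Make `ℕ × ℕ` into a forest by declaring the children of `x` to be the nodes `(e x, q)`, where
`e : ℕ × ℕ → ℕ` is injective with `x.1 < e x`, and let `labels e x` be the set of all `e y` for the
descendants `y` of `x`. Injectivity of `e` gives every node at most one parent, so two nodes with
a common descendant are comparable; the first coordinate strictly increases down the forest, so
comparable nodes `(k, n)` and `(k, n')` coincide. The required properties follow from these facts.
-/

open Relation Function

namespace NestedFamily

variable {e : ℕ × ℕ → ℕ}

def IsChild (e : ℕ × ℕ → ℕ) (x y : ℕ × ℕ) : Prop := y.1 = e x

theorem rightUnique_swap_isChild (he : e.Injective) : Relator.RightUnique (swap (IsChild e)) :=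
  fun _ _ _ hb hc => he (hb.symm.trans hc)

theorem reflTransGen_isChild_total (he : e.Injective) {x y z : ℕ × ℕ}
    (hx : ReflTransGen (IsChild e) x z) (hy : ReflTransGen (IsChild e) y z) :
    ReflTransGen (IsChild e) x y ∨ ReflTransGen (IsChild e) y x := by
  simpa only [reflTransGen_swap, or_comm] using
    (reflTransGen_swap.2 hx).total_of_right_unique (rightUnique_swap_isChild he)
      (reflTransGen_swap.2 hy)

theorem fst_lt_of_transGen_isChild (he : ∀ x, x.1 < e x) {x y : ℕ × ℕ}
    (h : TransGen (IsChild e) x y) : x.1 < y.1 := by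
  induction h with
  | single hxy => exact hxy ▸ he x
  | tail _ hyz ih => exact ih.trans (hyz ▸ he _)

theorem fst_le_of_reflTransGen_isChild (he : ∀ x, x.1 < e x) {x y : ℕ × ℕ}
    (h : ReflTransGen (IsChild e) x y) : x.1 ≤ y.1 := by
  rcases reflTransGen_iff_eq_or_transGen.1 h with rfl | h
  · rfl
  · exact (fst_lt_of_transGen_isChild he h).le

theorem eq_of_reflTransGen_isChild_of_fst_le (he : ∀ x, x.1 < e x) {x y : ℕ × ℕ}
    (h : ReflTransGen (IsChild e) x y) (hle : y.1 ≤ x.1) : x = y := by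
  rcases reflTransGen_iff_eq_or_transGen.1 h with rfl | h
  · rfl
  · exact absurd hle (fst_lt_of_transGen_isChild he h).not_ge

def labels (e : ℕ × ℕ → ℕ) (x : ℕ × ℕ) : Set ℕ := e '' {y | ReflTransGen (IsChild e) x y}

theorem labels_infinite (he : e.Injective) (x : ℕ × ℕ) : (labels e x).Infinite := by
  refine Set.infinite_of_injective_forall_mem (f := fun q => e (e x, q)) ?_ ?_
  · exact fun q q' h => (Prod.ext_iff.1 (he h)).2
  · exact fun q => ⟨(e x, q), ReflTransGen.single rfl, rfl⟩

theorem fst_lt_of_mem_labels (he : ∀ x, x.1 < e x) {x : ℕ × ℕ} {m : ℕ} (hm : m ∈ labels e x) :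
    x.1 < m := by
  obtain ⟨y, hxy, rfl⟩ := hm
  exact (fst_le_of_reflTransGen_isChild he hxy).trans_lt (he y)

theorem labels_subset_of_reflTransGen {x y : ℕ × ℕ} (h : ReflTransGen (IsChild e) x y) :
    labels e y ⊆ labels e x := by
  rintro _ ⟨z, hyz, rfl⟩
  exact ⟨z, h.trans hyz, rfl⟩

theorem labels_subset_of_mem_labels {x : ℕ × ℕ} {p : ℕ} (hp : p ∈ labels e x) (q : ℕ) :
    labels e (p, q) ⊆ labels e x := by
  obtain ⟨y, hxy, rfl⟩ := hp
  exact labels_subset_of_reflTransGen (hxy.tail rfl)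

theorem reflTransGen_of_labels_inter_nonempty (he_inj : e.Injective) (he : ∀ x, x.1 < e x)
    {x y : ℕ × ℕ} (hle : x.1 ≤ y.1) (hxy : (labels e x ∩ labels e y).Nonempty) :
    ReflTransGen (IsChild e) x y := by
  obtain ⟨_, ⟨z, hxz, rfl⟩, ⟨z', hyz', hz⟩⟩ := hxy
  rcases reflTransGen_isChild_total he_inj hxz (he_inj hz ▸ hyz') with h | h
  · exact h
  · rw [eq_of_reflTransGen_isChild_of_fst_le he h hle]

theorem labels_disjoint (he_inj : e.Injective) (he : ∀ x, x.1 < e x) (k : ℕ) :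
    Pairwise fun n n' => Disjoint (labels e (k, n)) (labels e (k, n')) := by
  intro n n' hnn'
  rw [Set.disjoint_iff_inter_eq_empty, ← Set.not_nonempty_iff_eq_empty]
  intro hkk
  have h := reflTransGen_of_labels_inter_nonempty he_inj he (le_refl k) hkk
  exact hnn' (Prod.ext_iff.1 (eq_of_reflTransGen_isChild_of_fst_le he h le_rfl)).2

end NestedFamily

open NestedFamily in
/-- There exists a family `(I_{k,n})_{k,n}` of infinite subsets of `ℕ` such that:
(i) `k < min I_{k,n}` (every element of `I_{k,n}` exceeds `k`);
(ii) for each fixed `k`, the sets `(I_{k,n})_n` are pairwise disjoint;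
(iii) if `k ≤ k'` and `I_{k,n} ∩ I_{k',n'} ≠ ∅` then `I_{k',n'} ⊆ I_{k,n}`;
(iv) if `p ∈ I_{k,n}` then `I_{p,q} ⊆ I_{k,n}` for every `q`. -/
theorem exists_nested_family :
    ∃ I : ℕ → ℕ → Set ℕ,
      (∀ k n, (I k n).Infinite) ∧
      (∀ k n, ∀ m ∈ I k n, k < m) ∧
      (∀ k, Pairwise fun n n' => Disjoint (I k n) (I k n')) ∧
      (∀ k k' n n', k ≤ k' → (I k n ∩ I k' n').Nonempty → I k' n' ⊆ I k n) ∧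
      (∀ k n p q, p ∈ I k n → I p q ⊆ I k n) := by
  set e : ℕ × ℕ → ℕ := fun x => Nat.pairEquiv x + 1
  have he_inj : e.Injective := (add_left_injective 1).comp Nat.pairEquiv.injective
  have he : ∀ x, x.1 < e x := fun x => Nat.lt_succ_of_le (Nat.left_le_pair x.1 x.2)
  refine ⟨fun k n => labels e (k, n), fun k n => labels_infinite he_inj _,
    fun k n _ => fst_lt_of_mem_labels he, labels_disjoint he_inj he,
    fun k k' n n' hkk' hkn => labels_subset_of_reflTransGen
      (reflTransGen_of_labels_inter_nonempty he_inj he hkk' hkn),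
    fun k n p q hp => labels_subset_of_mem_labels hp q⟩
end

section
/- There exists a sequence (Γ_n) of pairwise disjoint subsets of {(x,y) ∈ ℕ × ℕ : x < y} such that, setting H = {A ⊆ ℕ : (A × A) ∩ Γ_n = ∅ for some n}, the set ℕ is not the union of finitely many elements of H. -/
/-!
Encode `ℕ →₀ ℕ` injectively into `ℕ` and let `Γ n` consist of the (ordered) codes of pairs of
finitely supported functions that differ only at coordinate `n`. Distinct directions give disjoint
families, since two functions agreeing off `n` and off `n' ≠ n` are equal. A set avoiding `Γ n`
meets the cube `(Fin (m + 1) → Fin m)`, embedded into `ℕ →₀ ℕ`, in at most `m ^ m` points, because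
forgetting coordinate `n` is injective on it. So `k` such sets with directions below `m + 1` cover
at most `k * m ^ m` of the `m ^ (m + 1)` points of the cube, and fail to cover it once `m > k`.
-/

open Function Finset

section HammingCube

variable {ι α β : Type*} [Fintype ι] [Fintype α]

theorem Finset.card_le_pow_of_agree_off_eq (i : ι) (S : Finset (ι → α))
    (hS : ∀ v ∈ S, ∀ w ∈ S, (∀ j ≠ i, v j = w j) → v = w) :
    #S ≤ Fintype.card α ^ (Fintype.card ι - 1) := by
  classical
  calc #S ≤ #(univ : Finset ({j // j ≠ i} → α)) :=
        card_le_card_of_injOn (fun v j => v j) (fun _ _ => mem_coe.2 (mem_univ _))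
          fun v hv w hw hvw => hS v hv w hw fun j hj => congrFun hvw ⟨j, hj⟩
    _ = Fintype.card α ^ (Fintype.card ι - 1) := by
        rw [card_univ, Fintype.card_fun, ← Set.card_ne_eq i]
        rfl

theorem Fintype.card_le_card_of_cover_agree_off_eq [Nonempty ι] (J : Finset β)
    (S : β → Finset (ι → α)) (hcover : ∀ v, ∃ b ∈ J, v ∈ S b)
    (hS : ∀ b ∈ J, ∃ i, ∀ v ∈ S b, ∀ w ∈ S b, (∀ j ≠ i, v j = w j) → v = w) :
    Fintype.card α ≤ #J := by
  classical
  rcases Nat.eq_zero_or_pos (Fintype.card α) with hα | hα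
  · exact hα ▸ Nat.zero_le _
  have hcard : Fintype.card α * Fintype.card α ^ (Fintype.card ι - 1) ≤
      #J * Fintype.card α ^ (Fintype.card ι - 1) := by
    calc Fintype.card α * Fintype.card α ^ (Fintype.card ι - 1)
        = #(univ : Finset (ι → α)) := by
          rw [card_univ, Fintype.card_fun, ← pow_succ',
            Nat.sub_add_cancel Fintype.card_pos]
      _ ≤ #(J.biUnion S) := card_le_card fun v _ => by
          obtain ⟨b, hb, hv⟩ := hcover v
          exact mem_biUnion.2 ⟨b, hb, hv⟩
      _ ≤ ∑ b ∈ J, #(S b) := card_biUnion_le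
      _ ≤ ∑ _b ∈ J, Fintype.card α ^ (Fintype.card ι - 1) :=
          sum_le_sum fun b hb => card_le_pow_of_agree_off_eq _ (S b) (hS b hb).choose_spec
      _ = #J * Fintype.card α ^ (Fintype.card ι - 1) := by rw [sum_const, smul_eq_mul]
  exact Nat.le_of_mul_le_mul_right hcard (pow_pos hα _)

end HammingCube

section CubeEmbedding

variable {k m : ℕ}

noncomputable def cubeEmb (v : Fin k → Fin m) : ℕ →₀ ℕ :=
  Finsupp.onFinset (range k) (fun j => if h : j < k then v ⟨j, h⟩ else 0) fun j hj => by
    by_contra hjk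
    exact hj (dif_neg (by simpa using hjk))

theorem cubeEmb_apply (v : Fin k → Fin m) (j : ℕ) :
    cubeEmb v j = if h : j < k then (v ⟨j, h⟩ : ℕ) else 0 :=
  Finsupp.onFinset_apply

theorem cubeEmb_injective : Injective (cubeEmb : (Fin k → Fin m) → ℕ →₀ ℕ) := by
  intro v w hvw
  funext i
  have := DFunLike.congr_fun hvw (i : ℕ)
  simpa [cubeEmb_apply, Fin.ext_iff] using this

theorem cubeEmb_agree_off {v w : Fin k → Fin m} {n : ℕ} (hvw : ∀ i : Fin k, (i : ℕ) ≠ n → v i = w i)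
    (j : ℕ) (hj : j ≠ n) : cubeEmb v j = cubeEmb w j := by
  rw [cubeEmb_apply, cubeEmb_apply]
  split_ifs with h
  · rw [hvw ⟨j, h⟩ hj]
  · rfl

end CubeEmbedding

section HammingPairs

variable {code : (ℕ →₀ ℕ) → ℕ}

def hammingPairs (code : (ℕ →₀ ℕ) → ℕ) (n : ℕ) : Set (ℕ × ℕ) :=
  {p | p.1 < p.2 ∧ ∃ v w : ℕ →₀ ℕ, code v = p.1 ∧ code w = p.2 ∧ ∀ i ≠ n, v i = w i}

theorem pairwise_disjoint_hammingPairs (hcode : Injective code) :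
    Pairwise fun n n' => Disjoint (hammingPairs code n) (hammingPairs code n') := by
  intro n n' hnn'
  rw [Set.disjoint_left]
  rintro ⟨x, y⟩ ⟨hxy, v, w, hv, hw, hvw⟩ ⟨-, v', w', hv', hw', hvw'⟩
  obtain rfl : v' = v := hcode (hv'.trans hv.symm)
  obtain rfl : w' = w := hcode (hw'.trans hw.symm)
  have : v' = w' := by
    ext i
    by_cases hi : i = n
    · exact hvw' i (hi ▸ hnn')
    · exact hvw i hi
  exact hxy.ne (hv.symm.trans ((congrArg code this).trans hw))

theorem eq_of_agree_off_of_inter_hammingPairs_eq_empty (hcode : Injective code) {A : Set ℕ}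
    {n : ℕ} (hA : (A ×ˢ A) ∩ hammingPairs code n = ∅) {v w : ℕ →₀ ℕ} (hv : code v ∈ A)
    (hw : code w ∈ A) (hvw : ∀ i ≠ n, v i = w i) : v = w := by
  have hA' := Set.eq_empty_iff_forall_notMem.1 hA
  rcases lt_trichotomy (code v) (code w) with h | h | h
  · exact (hA' (code v, code w) ⟨⟨hv, hw⟩, h, v, w, rfl, rfl, hvw⟩).elim
  · exact hcode h
  · exact (hA' (code w, code v)
      ⟨⟨hw, hv⟩, h, w, v, rfl, rfl, fun i hi => (hvw i hi).symm⟩).elim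

end HammingPairs

/-- There exists a sequence `(Γ_n)` of pairwise disjoint subsets of
`{(x,y) ∈ ℕ × ℕ : x < y}` such that, setting
`H = {A ⊆ ℕ : (A × A) ∩ Γ_n = ∅ for some n}`, the set `ℕ` is not the union of
finitely many elements of `H`. -/
theorem exists_gamma_family :
    ∃ Γ : ℕ → Set (ℕ × ℕ),
      (∀ n, ∀ p ∈ Γ n, p.1 < p.2) ∧
      (Pairwise fun n m => Disjoint (Γ n) (Γ m)) ∧
      ∀ J : Finset (Set ℕ), (∀ A ∈ J, ∃ n, (A ×ˢ A) ∩ Γ n = ∅) →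
        (⋃ A ∈ J, A) ≠ Set.univ := by
  classical
  obtain ⟨code, hcode⟩ := Countable.exists_injective_nat (ℕ →₀ ℕ)
  refine ⟨hammingPairs code, fun n p hp => hp.1, pairwise_disjoint_hammingPairs hcode, ?_⟩
  intro J hJ hU
  choose! n hn using hJ
  set m := #J + J.sup n + 1
  have hdir : ∀ A ∈ J, n A < m + 1 := fun A hA => by
    have := le_sup (f := n) hA
    omega
  let S (A : Set ℕ) : Finset (Fin (m + 1) → Fin m) := univ.filter fun v => code (cubeEmb v) ∈ A
  have hcover (v : Fin (m + 1) → Fin m) : ∃ A ∈ J, v ∈ S A := by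
    obtain ⟨A, hA, hvA⟩ := Set.mem_iUnion₂.1 (hU ▸ Set.mem_univ (code (cubeEmb v)))
    exact ⟨A, hA, mem_filter.2 ⟨mem_univ v, hvA⟩⟩
  have hindep (A) (hA : A ∈ J) (v) (hv : v ∈ S A) (w) (hw : w ∈ S A)
      (hvw : ∀ i ≠ (⟨n A, hdir A hA⟩ : Fin (m + 1)), v i = w i) : v = w :=
    cubeEmb_injective <| eq_of_agree_off_of_inter_hammingPairs_eq_empty hcode (hn A hA)
      (mem_filter.1 hv).2 (mem_filter.1 hw).2 <| cubeEmb_agree_off fun i hi =>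
        hvw i fun h => hi (by rw [h])
  have := Fintype.card_le_card_of_cover_agree_off_eq J S hcover fun A hA => ⟨_, hindep A hA⟩
  rw [Fintype.card_fin] at this
  omega
end

section
/- Let (X,d) be a metric space and C ⊆ X × X a cyclically monotonic set. If (x_0,x_1), (x_1,x_2), …, (x_{n−1},x_n) ∈ C, then Σ_{k=1}^n d(x_{k−1},x_k) = d(x_0,x_n); in particular each intermediate point x_k lies on the metric segment [x_0,x_n] = {p : d(x_0,p)+d(p,x_n) = d(x_0,x_n)}. -/
theorem dist_add_dist_le_sum_dist_succ {X : Type*} [PseudoMetricSpace X] {n : ℕ}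
    (x : Fin (n + 1) → X) (i : Fin (n + 1)) :
    dist (x 0) (x i) + dist (x i) (x (Fin.last n)) ≤
      ∑ k : Fin n, dist (x k.castSucc) (x k.succ) := by
  induction n with
  | zero => simp [Fin.fin_one_eq_zero i]
  | succ n ih =>
    rw [Fin.sum_univ_castSucc, Fin.succ_last]
    induction i using Fin.lastCases with
    | last =>
      have := ih (x ∘ Fin.castSucc) (Fin.last n)
      simp only [Function.comp_apply, Fin.castSucc_zero, Fin.succ_castSucc, dist_self,
        add_zero] at this ⊢
      linarith [dist_triangle (x 0) (x (Fin.last n).castSucc) (x (Fin.last (n + 1)))]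
    | cast j =>
      have := ih (x ∘ Fin.castSucc) j
      simp only [Function.comp_apply, Fin.castSucc_zero, Fin.succ_castSucc] at this ⊢
      linarith [dist_triangle (x j.castSucc) (x (Fin.last n).castSucc) (x (Fin.last (n + 1)))]

theorem dist_le_sum_dist_succ {X : Type*} [PseudoMetricSpace X] {n : ℕ}
    (x : Fin (n + 1) → X) :
    dist (x 0) (x (Fin.last n)) ≤ ∑ k : Fin n, dist (x k.castSucc) (x k.succ) := by
  simpa using dist_add_dist_le_sum_dist_succ x 0

theorem IsCyclicallyMonotonic.sum_le_of_chain {X : Type*} {d : X → X → ℝ} {C : Set (X × X)}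
    (hC : IsCyclicallyMonotonic d C) (hd : ∀ a, d a a = 0) {n : ℕ} (x : Fin (n + 1) → X)
    (hx : ∀ k : Fin n, (x k.castSucc, x k.succ) ∈ C) :
    ∑ k : Fin n, d (x k.castSucc) (x k.succ) ≤ d (x 0) (x (Fin.last n)) := by
  cases n with
  | zero => simp [hd]
  | succ m =>
    refine (hC _ _ hx (finRotate (m + 1)).symm).trans_eq ?_
    have rotate_zero : (finRotate (m + 1)).symm 0 = Fin.last m :=
      (Equiv.symm_apply_eq _).2 finRotate_last.symm
    have rotate_succ (j : Fin m) : (finRotate (m + 1)).symm j.succ = j.castSucc :=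
      (Equiv.symm_apply_eq _).2 <| Fin.ext <| by
        rw [coe_finRotate_of_ne_last (Fin.castSucc_lt_last j).ne]; simp
    simp only [Fin.sum_univ_succ, rotate_zero, rotate_succ, Fin.succ_castSucc, Fin.castSucc_zero,
      Fin.succ_last, hd, Finset.sum_const_zero, add_zero]

/-- Let `(X,d)` be a metric space and `C ⊆ X × X` cyclically monotonic.  If
`(x_0,x_1), (x_1,x_2), …, (x_{n-1},x_n) ∈ C`, then
`Σ_{k=1}^n d(x_{k-1},x_k) = d(x_0,x_n)`; in particular each intermediate point `x_k`
lies on the metric segment `[x_0,x_n]`. -/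
theorem cyclicallyMonotonic_chain {X : Type*} [MetricSpace X] (C : Set (X × X))
    (hC : IsCyclicallyMonotonic dist C) (n : ℕ) (x : Fin (n + 1) → X)
    (hx : ∀ i : Fin n, (x i.castSucc, x i.succ) ∈ C) :
    (∑ i : Fin n, dist (x i.castSucc) (x i.succ) = dist (x 0) (x (Fin.last n))) ∧
    ∀ i : Fin (n + 1),
      dist (x 0) (x i) + dist (x i) (x (Fin.last n)) = dist (x 0) (x (Fin.last n)) := by
  have chain_sum : ∑ i : Fin n, dist (x i.castSucc) (x i.succ) = dist (x 0) (x (Fin.last n)) :=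
    le_antisymm (hC.sum_le_of_chain dist_self x hx) (dist_le_sum_dist_succ x)
  exact ⟨chain_sum, fun i =>
    le_antisymm ((dist_add_dist_le_sum_dist_succ x i).trans_eq chain_sum) (dist_triangle _ _ _)⟩
end

section
/- There is a bounded uniformly discrete metric d on ℕ (with all nonzero distances in [1/2,1]) and points ξ, η in the Samuel (uniform) compactification of (ℕ,d) such that for every r ∈ [1/2,1] there exists ζ in the Stone–Čech compactification of \widetilde{ℕ} with coordinate pair (ξ,η) and d(ζ) = r, where d denotes the continuous extension of the distance function; consequently ‖Φ*δ_ζ‖ = 1/(2r) takes every value in [1/2,1]. -/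
/-!
Colour a pair `(p, q)` by the exponent of the `p`-th prime in `q`. A finite family of sets, each
missing some colour, cannot cover `ℕ`: prescribing exponents at finitely many primes leaves an
infinite set of candidates, and each infinite set in the family is avoided by prescribing its
missing colour at one of its points. Hence some ultrafilter `U` has every colour inside each of
its members. Put `d (2p) (2q+1) = v (colour of (p, q))` for a dense sequence `v` in `[1/2, 1]`,
and `1/2` elsewhere, and let `ξ, η` be the limits of `2p` and `2p + 1` along `U`. For each colour
`n`, an ultrafilter on pairs of colour `n` with both marginals `U` gives a point of `β ℕ̃` over
`(ξ, η)` where `D = v n`; as the fibre is compact, `D` takes every value `r ∈ [1/2, 1]` on it.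

If `F` extends `Φ f`, then `F · D = f̃ ∘ p₁ - f̃ ∘ p₂`, so `|F| · D` is constant on the fibre and
at most `1/2` (its value where `D = 1/2`). Half the indicator of the even numbers attains this.
-/

open Filter Set Topology

section Coloring

variable {α ι : Type*}

def MissesColor (c : α → α → ι) (n : ι) (S : Set α) : Prop :=
  ∀ a ∈ S, ∀ b ∈ S, c a b ≠ n

theorem exists_ultrafilter_forall_mem_exists_color (c : α → α → ι)
    (hc : ∀ T : Finset (Set α), (∀ S ∈ T, ∃ n, MissesColor c n S) →
      ⋃₀ (T : Set (Set α)) ≠ univ) :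
    ∃ U : Ultrafilter α, ∀ A ∈ U, ∀ n, ∃ a ∈ A, ∃ b ∈ A, c a b = n := by
  classical
  obtain ⟨U, hU⟩ := Ultrafilter.exists_ultrafilter_of_finite_inter_nonempty
    {C | ∃ n, MissesColor c n Cᶜ} fun T hT => by
      obtain ⟨x, hx⟩ := (ne_univ_iff_exists_notMem _).1 <| hc (T.image compl) <|
        Finset.forall_mem_image.2 fun C hC => hT (Finset.mem_coe.2 hC)
      refine ⟨x, fun C hC => by_contra fun hxC => hx ⟨Cᶜ, ?_, hxC⟩⟩
      exact Finset.mem_coe.2 (Finset.mem_image_of_mem _ hC)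
  refine ⟨U, fun A hA n => ?_⟩
  by_contra! hAn
  exact Ultrafilter.compl_notMem_iff.2 hA (hU ⟨n, by rwa [compl_compl]⟩)

end Coloring

noncomputable section PrimeExponent

def primeExponent (p q : ℕ) : ℕ := q.factorization (Nat.nth Nat.Prime p)

lemma primeExponent_prod_pow (F : Finset ℕ) (g : ℕ → ℕ) {a : ℕ} (ha : a ∈ F) :
    primeExponent a (∏ b ∈ F, Nat.nth Nat.Prime b ^ g b) = g a := by
  have hprime (b : ℕ) := Nat.prime_nth_prime b
  have hinj : Function.Injective (Nat.nth Nat.Prime) :=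
    (Nat.nth_strictMono Nat.infinite_setOfPred_prime).injective
  rw [primeExponent, Nat.factorization_prod fun b _ => pow_ne_zero _ (hprime b).ne_zero,
    Finsupp.finsetSum_apply, Finset.sum_eq_single a]
  · simp [(hprime a).factorization_pow]
  · intro b _ hba
    simp [(hprime b).factorization_pow, hinj.ne hba]
  · exact fun h => (h ha).elim

def primeExponentCylinder (F : Finset ℕ) (g : ℕ → ℕ) : Set ℕ :=
  {q | ∀ a ∈ F, primeExponent a q = g a}

lemma primeExponentCylinder_infinite (F : Finset ℕ) (g : ℕ → ℕ) :
    (primeExponentCylinder F g).Infinite := by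
  classical
  refine infinite_of_not_bddAbove fun ⟨B, hB⟩ => ?_
  set K := B + F.sup id + 1
  have hKF : K ∉ F := fun hK => by
    have : K ≤ F.sup id := Finset.le_sup (f := id) hK
    omega
  set q := ∏ b ∈ insert K F, Nat.nth Nat.Prime b ^ Function.update g K 1 b
  have hq : q ∈ primeExponentCylinder F g := fun a ha => by
    rw [primeExponent_prod_pow _ _ (Finset.mem_insert_of_mem ha),
      Function.update_of_ne (ne_of_mem_of_not_mem ha hKF)]
  have hKq : Nat.nth Nat.Prime K ∣ q := by
    simpa using Finset.dvd_prod_of_mem (fun b => Nat.nth Nat.Prime b ^ Function.update g K 1 b)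
      (Finset.mem_insert_self K F)
  have hq0 : q ≠ 0 :=
    Finset.prod_ne_zero_iff.2 fun b _ => pow_ne_zero _ (Nat.prime_nth_prime b).ne_zero
  have hK : K ≤ Nat.nth Nat.Prime K := (Nat.nth_strictMono Nat.infinite_setOfPred_prime).le_apply
  have hKq' := Nat.le_of_dvd (Nat.pos_of_ne_zero hq0) hKq
  have hqB := hB hq
  omega

lemma exists_primeExponentCylinder_inter_sUnion_finite (T : Finset (Set ℕ))
    (hT : ∀ S ∈ T, ∃ n, MissesColor primeExponent n S) :
    ∃ F g, (primeExponentCylinder F g ∩ ⋃₀ (T : Set (Set ℕ))).Finite := by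
  classical
  induction T using Finset.induction_on with
  | empty => exact ⟨∅, id, by simp⟩
  | insert S T _ ih =>
    obtain ⟨F, g, hfin⟩ := ih fun S' hS' => hT S' (Finset.mem_insert_of_mem hS')
    obtain ⟨n, hn⟩ := hT S (Finset.mem_insert_self S T)
    rw [Finset.coe_insert, sUnion_insert]
    rcases S.finite_or_infinite with hS | hS
    · exact ⟨F, g, (hS.union hfin).subset fun q ⟨hq, hqS⟩ => hqS.imp id fun h => ⟨hq, h⟩⟩
    · -- every point of the smaller cylinder has colour `n` with `a ∈ S`, so it is not in `S`
      obtain ⟨a, haS, haF⟩ := hS.exists_notMem_finset F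
      refine ⟨insert a F, Function.update g a n, hfin.subset ?_⟩
      rintro q ⟨hq, hqS | hqT⟩
      · exact absurd (by simpa using hq a (Finset.mem_insert_self a F)) (hn a haS q hqS)
      · refine ⟨fun b hb => ?_, hqT⟩
        rw [hq b (Finset.mem_insert_of_mem hb),
          Function.update_of_ne (ne_of_mem_of_not_mem hb haF)]

theorem sUnion_ne_univ_of_missesColor_primeExponent (T : Finset (Set ℕ))
    (hT : ∀ S ∈ T, ∃ n, MissesColor primeExponent n S) : ⋃₀ (T : Set (Set ℕ)) ≠ univ := by
  obtain ⟨F, g, hfin⟩ := exists_primeExponentCylinder_inter_sUnion_finite T hT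
  intro hcover
  rw [hcover, inter_univ] at hfin
  exact primeExponentCylinder_infinite F g hfin

end PrimeExponent

noncomputable section Values

def ratIcc (n : ℕ) : Icc (1 / 2 : ℝ) 1 :=
  projIcc (1 / 2) 1 (by norm_num) (Denumerable.ofNat ℚ n)

lemma denseRange_ratIcc : DenseRange ratIcc := by
  have hsurj : (Denumerable.ofNat ℚ).Surjective := fun q => ⟨_, Denumerable.ofNat_encode q⟩
  have hdense : DenseRange fun n => ((Denumerable.ofNat ℚ n : ℚ) : ℝ) := by
    rw [DenseRange, ← Function.comp_def, hsurj.range_comp]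
    exact Rat.denseRange_cast
  exact (projIcc_surjective _).denseRange.comp hdense continuous_projIcc

end Values

lemma triangle_of_forall_ne_mem_Icc {α : Type*} {d : α → α → ℝ} {a : ℝ} (hd₀ : ∀ x, d x x = 0)
    (hd : ∀ x y, x ≠ y → d x y ∈ Icc a (2 * a)) (x y z : α) : d x z ≤ d x y + d y z := by
  rcases eq_or_ne x y with rfl | hxy
  · simp [hd₀]
  rcases eq_or_ne y z with rfl | hyz
  · simp [hd₀]
  have h₁ := hd x y hxy
  have h₂ := hd y z hyz
  rcases eq_or_ne x z with rfl | hxz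
  · linarith [hd₀ x, h₁.1, h₁.2, h₂.1]
  · linarith [(hd x z hxz).2, h₁.1, h₂.1]

noncomputable section ColorDist

variable {ι : Type*} (c : ℕ → ℕ → ι) (v : ι → Icc (1 / 2 : ℝ) 1)

/-- The paper's `Γ_n` is `{(p, q) | c p q = n}` and its `q_n` is `v n`. Taking the maximum over
both orders makes `colorDist` symmetric: `colorDist (2p) (2q+1) = v (c p q)` and every other pair
of distinct points is at distance `1/2`. -/
def evenOddWeight (x y : ℕ) : ℝ :=
  if Even x ∧ Odd y then v (c (x / 2) (y / 2)) else 1 / 2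

def colorDist (x y : ℕ) : ℝ :=
  if x = y then 0 else max (evenOddWeight c v x y) (evenOddWeight c v y x)

lemma evenOddWeight_mem_Icc (x y : ℕ) : evenOddWeight c v x y ∈ Icc (1 / 2 : ℝ) 1 := by
  unfold evenOddWeight
  split_ifs
  exacts [Subtype.prop _, by norm_num]

lemma colorDist_self (x : ℕ) : colorDist c v x x = 0 := if_pos rfl

lemma colorDist_comm (x y : ℕ) : colorDist c v x y = colorDist c v y x := by
  simp only [colorDist, eq_comm, max_comm]

lemma colorDist_mem_Icc {x y : ℕ} (h : x ≠ y) : colorDist c v x y ∈ Icc (1 / 2 : ℝ) 1 := by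
  rw [colorDist, if_neg h]
  exact ⟨le_max_of_le_left (evenOddWeight_mem_Icc c v x y).1,
    max_le (evenOddWeight_mem_Icc c v x y).2 (evenOddWeight_mem_Icc c v y x).2⟩

lemma colorDist_triangle (x y z : ℕ) :
    colorDist c v x z ≤ colorDist c v x y + colorDist c v y z :=
  triangle_of_forall_ne_mem_Icc (a := 1 / 2) (colorDist_self c v)
    (fun _ _ h => by simpa using colorDist_mem_Icc c v h) x y z

lemma colorDist_two_mul_two_mul_add_one (p q : ℕ) :
    colorDist c v (2 * p) (2 * q + 1) = v (c p q) := by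
  have hodd : ¬ (Even (2 * q + 1) ∧ Odd (2 * p)) :=
    fun h => Nat.not_odd_iff_even.2 (even_two_mul p) h.2
  rw [colorDist, if_neg (by omega), evenOddWeight, evenOddWeight,
    if_pos ⟨even_two_mul p, odd_two_mul_add_one q⟩, if_neg hodd, max_eq_left (v _).2.1]
  congr 3 <;> omega

end ColorDist

theorem Ultrafilter.exists_tendsto_fst_tendsto_snd {β γ : Type*} (u : Ultrafilter β)
    (v : Ultrafilter γ) {R : Set (β × γ)} (h : ∀ A ∈ u, ∀ B ∈ v, (A ×ˢ B ∩ R).Nonempty) :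
    ∃ w : Ultrafilter (β × γ), R ∈ w ∧ Tendsto Prod.fst (w : Filter (β × γ)) u ∧
      Tendsto Prod.snd (w : Filter (β × γ)) v := by
  have : NeBot ((u : Filter β) ×ˢ (v : Filter γ) ⊓ 𝓟 R) :=
    inf_principal_neBot_iff.2 fun s hs => by
      obtain ⟨A, hA, B, hB, hAB⟩ := mem_prod_iff.1 hs
      exact (h A hA B hB).mono (inter_subset_inter_left R hAB)
  have hw := Ultrafilter.of_le ((u : Filter β) ×ˢ (v : Filter γ) ⊓ 𝓟 R)
  exact ⟨.of _, hw (mem_inf_of_right (mem_principal_self R)),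
    tendsto_fst.mono_left (hw.trans inf_le_left), tendsto_snd.mono_left (hw.trans inf_le_left)⟩

section StoneCech

variable {α : Type*} [TopologicalSpace α]

lemma tendsto_stoneCechUnit_lim {β : Type*} (u : Ultrafilter β) (e : β → α) :
    Tendsto (stoneCechUnit ∘ e) u (𝓝 (u.map (stoneCechUnit ∘ e)).lim) :=
  Ultrafilter.le_nhds_lim (u.map (stoneCechUnit ∘ e))

noncomputable def stoneCechExtendIcc [DiscreteTopology α] {a b : ℝ} (f : α → ℝ)
    (hf : ∀ x, f x ∈ Icc a b) : StoneCech α → ℝ :=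
  fun z =>
    (stoneCechExtend (continuous_of_discreteTopology (f := fun x => (⟨f x, hf x⟩ : Icc a b))) z).1

variable [DiscreteTopology α] {a b : ℝ} {f : α → ℝ} (hf : ∀ x, f x ∈ Icc a b)

lemma continuous_stoneCechExtendIcc : Continuous (stoneCechExtendIcc f hf) :=
  continuous_subtype_val.comp (continuous_stoneCechExtend _)

@[simp]
lemma stoneCechExtendIcc_stoneCechUnit (x : α) :
    stoneCechExtendIcc f hf (stoneCechUnit x) = f x := by
  simp [stoneCechExtendIcc]

lemma stoneCechExtendIcc_mem (z : StoneCech α) : stoneCechExtendIcc f hf z ∈ Icc a b :=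
  Subtype.prop _

lemma stoneCechExtendIcc_eq_of_mem_closure {s : Set α} {c : ℝ} (hs : ∀ x ∈ s, f x = c)
    {z : StoneCech α} (hz : z ∈ closure (stoneCechUnit '' s)) :
    stoneCechExtendIcc f hf z = c := by
  refine closure_minimal ?_ (isClosed_eq (continuous_stoneCechExtendIcc hf) continuous_const) hz
  rintro _ ⟨x, hx, rfl⟩
  simpa using hs x hx

end StoneCech

section OffDiag

variable (α : Type*) [TopologicalSpace α]

abbrev OffDiag : Type _ := {p : α × α // p.1 ≠ p.2}

variable {α}

noncomputable def pairFst : StoneCech (OffDiag α) → StoneCech α :=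
  stoneCechExtend (continuous_stoneCechUnit.comp (continuous_fst.comp continuous_subtype_val))

noncomputable def pairSnd : StoneCech (OffDiag α) → StoneCech α :=
  stoneCechExtend (continuous_stoneCechUnit.comp (continuous_snd.comp continuous_subtype_val))

lemma continuous_pairFst : Continuous (pairFst : StoneCech (OffDiag α) → StoneCech α) :=
  continuous_stoneCechExtend _

lemma continuous_pairSnd : Continuous (pairSnd : StoneCech (OffDiag α) → StoneCech α) :=
  continuous_stoneCechExtend _

@[simp]
lemma pairFst_stoneCechUnit (t : OffDiag α) : pairFst (stoneCechUnit t) = stoneCechUnit t.1.1 :=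
  stoneCechExtend_stoneCechUnit _ t

@[simp]
lemma pairSnd_stoneCechUnit (t : OffDiag α) : pairSnd (stoneCechUnit t) = stoneCechUnit t.1.2 :=
  stoneCechExtend_stoneCechUnit _ t

variable [DiscreteTopology α] (d : α → α → ℝ) (hd : ∀ x y, x ≠ y → d x y ∈ Icc (1 / 2 : ℝ) 1)

noncomputable def distExtend : StoneCech (OffDiag α) → ℝ :=
  stoneCechExtendIcc (fun t : OffDiag α => d t.1.1 t.1.2) fun t => hd _ _ t.2

lemma continuous_distExtend : Continuous (distExtend d hd) := continuous_stoneCechExtendIcc _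

@[simp]
lemma distExtend_stoneCechUnit (t : OffDiag α) :
    distExtend d hd (stoneCechUnit t) = d t.1.1 t.1.2 :=
  stoneCechExtendIcc_stoneCechUnit _ t

lemma distExtend_mem_Icc (z : StoneCech (OffDiag α)) : distExtend d hd z ∈ Icc (1 / 2 : ℝ) 1 :=
  stoneCechExtendIcc_mem _ z

end OffDiag

noncomputable section Fiber

variable {ι : Type*} {c : ℕ → ℕ → ι} {v : ι → Icc (1 / 2 : ℝ) 1} (U : Ultrafilter ℕ)

def evenLimit : StoneCech ℕ := (U.map (stoneCechUnit ∘ (2 * ·))).lim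

def oddLimit : StoneCech ℕ := (U.map (stoneCechUnit ∘ (2 * · + 1))).lim

lemma tendsto_evenLimit : Tendsto (fun p => stoneCechUnit (2 * p)) U (𝓝 (evenLimit U)) :=
  tendsto_stoneCechUnit_lim U _

lemma tendsto_oddLimit : Tendsto (fun p => stoneCechUnit (2 * p + 1)) U (𝓝 (oddLimit U)) :=
  tendsto_stoneCechUnit_lim U _

lemma evenLimit_mem_closure : evenLimit U ∈ closure (stoneCechUnit '' {x | Even x}) :=
  mem_closure_of_tendsto (tendsto_evenLimit U)
    (Eventually.of_forall fun p => ⟨2 * p, even_two_mul p, rfl⟩)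

lemma oddLimit_mem_closure : oddLimit U ∈ closure (stoneCechUnit '' {x | Even x}ᶜ) :=
  mem_closure_of_tendsto (tendsto_oddLimit U)
    (Eventually.of_forall fun p => ⟨2 * p + 1, by simp [parity_simps], rfl⟩)

def evenOddPair (pq : ℕ × ℕ) : OffDiag ℕ := ⟨(2 * pq.1, 2 * pq.2 + 1), by omega⟩

variable {U}

theorem exists_distExtend_colorDist_eq_value (hU : ∀ A ∈ U, ∀ n, ∃ a ∈ A, ∃ b ∈ A, c a b = n)
    (n : ι) : ∃ ζ, pairFst ζ = evenLimit U ∧ pairSnd ζ = oddLimit U ∧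
      distExtend (colorDist c v) (fun _ _ => colorDist_mem_Icc c v) ζ = v n := by
  obtain ⟨w, hwn, hfst, hsnd⟩ :=
    U.exists_tendsto_fst_tendsto_snd U (R := {pq | c pq.1 pq.2 = n}) fun A hA B hB => by
      obtain ⟨a, ⟨haA, -⟩, b, ⟨-, hbB⟩, hab⟩ := hU _ (inter_mem hA hB) n
      exact ⟨(a, b), ⟨haA, hbB⟩, hab⟩
  set ζ := (w.map (stoneCechUnit ∘ evenOddPair)).lim
  have hζ := tendsto_stoneCechUnit_lim w evenOddPair
  refine ⟨ζ, tendsto_nhds_unique ((continuous_pairFst.tendsto ζ).comp hζ) ?_,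
    tendsto_nhds_unique ((continuous_pairSnd.tendsto ζ).comp hζ) ?_,
    tendsto_nhds_unique (((continuous_distExtend _ _).tendsto ζ).comp hζ) ?_⟩
  · simpa [Function.comp_def, evenOddPair] using (tendsto_evenLimit U).comp hfst
  · simpa [Function.comp_def, evenOddPair] using (tendsto_oddLimit U).comp hsnd
  · refine tendsto_const_nhds.congr' <| eventually_of_mem hwn fun pq (hpq : c pq.1 pq.2 = n) => ?_
    simp [evenOddPair, colorDist_two_mul_two_mul_add_one, hpq]

theorem exists_distExtend_colorDist_eq (hU : ∀ A ∈ U, ∀ n, ∃ a ∈ A, ∃ b ∈ A, c a b = n)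
    (hv : DenseRange v) {r : ℝ} (hr : r ∈ Icc (1 / 2 : ℝ) 1) :
    ∃ ζ, pairFst ζ = evenLimit U ∧ pairSnd ζ = oddLimit U ∧
      distExtend (colorDist c v) (fun _ _ => colorDist_mem_Icc c v) ζ = r := by
  set D := distExtend (colorDist c v) (fun _ _ => colorDist_mem_Icc c v)
  set K := {z | pairFst z = evenLimit U ∧ pairSnd z = oddLimit U}
  have hK : IsClosed (D '' K) :=
    (((isClosed_eq continuous_pairFst continuous_const).inter
      (isClosed_eq continuous_pairSnd continuous_const)).isCompact.image
        (continuous_distExtend _ _)).isClosed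
  have hvK : range (Subtype.val ∘ v) ⊆ D '' K := by
    rintro _ ⟨n, rfl⟩
    obtain ⟨ζ, h₁, h₂, h₃⟩ := exists_distExtend_colorDist_eq_value hU n
    exact ⟨ζ, ⟨h₁, h₂⟩, h₃⟩
  have hrv : r ∈ closure (range (Subtype.val ∘ v)) := by
    rw [range_comp]
    exact image_closure_subset_closure_image continuous_subtype_val
      ⟨⟨r, hr⟩, hv.closure_range ▸ mem_univ _, rfl⟩
  obtain ⟨ζ, ⟨h₁, h₂⟩, h₃⟩ := closure_minimal hvK hK hrv
  exact ⟨ζ, h₁, h₂, h₃⟩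

end Fiber

section LipschitzQuotient

variable {α : Type*} {d : α → α → ℝ} {f : α → ℝ}

lemma mem_Icc_of_lipschitz_of_eq_zero (hd : ∀ x y, x ≠ y → d x y ∈ Icc (1 / 2 : ℝ) 1) {x₀ : α}
    (hf : ∀ x y, |f x - f y| ≤ d x y) (hf₀ : f x₀ = 0) (x : α) : f x ∈ Icc (-1 : ℝ) 1 := by
  rcases eq_or_ne x x₀ with rfl | hx
  · simp [hf₀]
  · exact abs_le.1 (by simpa [hf₀] using (hf x x₀).trans (hd x x₀ hx).2)

variable [TopologicalSpace α] {F : StoneCech (OffDiag α) → ℝ}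

/-- `F` extends the difference quotient `Φ f (x, y) = (f x - f y) / d x y` of a function `f` in
the unit ball of `Lip₀(α, d)` based at `x₀`; the supremum of this set is `‖Φ* δ_ζ‖`. -/
def lipQuotientValues (d : α → α → ℝ) (x₀ : α) (ζ : StoneCech (OffDiag α)) : Set ℝ :=
  {s | ∃ (f : α → ℝ) (F : StoneCech (OffDiag α) → ℝ),
    (∀ x y, |f x - f y| ≤ d x y) ∧ f x₀ = 0 ∧ Continuous F ∧
    (∀ t : OffDiag α, F (stoneCechUnit t) = (f t.1.1 - f t.1.2) / d t.1.1 t.1.2) ∧ s = |F ζ|}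

lemma abs_le_one_of_stoneCechUnit_eq_div (hd : ∀ x y, x ≠ y → d x y ∈ Icc (1 / 2 : ℝ) 1)
    (hf : ∀ x y, |f x - f y| ≤ d x y) (hF : Continuous F)
    (hFu : ∀ t : OffDiag α, F (stoneCechUnit t) = (f t.1.1 - f t.1.2) / d t.1.1 t.1.2)
    (z : StoneCech (OffDiag α)) : |F z| ≤ 1 := by
  refine denseRange_stoneCechUnit.induction_on z (isClosed_le hF.abs continuous_const) fun t => ?_
  have hpos : 0 < d t.1.1 t.1.2 := by linarith [(hd _ _ t.2).1]
  rw [hFu, abs_div, abs_of_pos hpos]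
  exact div_le_one_of_le₀ (hf _ _) hpos.le

variable [DiscreteTopology α] (hd : ∀ x y, x ≠ y → d x y ∈ Icc (1 / 2 : ℝ) 1)

lemma exists_mul_distExtend_eq_sub {x₀ : α} (hf : ∀ x y, |f x - f y| ≤ d x y) (hf₀ : f x₀ = 0)
    (hF : Continuous F)
    (hFu : ∀ t : OffDiag α, F (stoneCechUnit t) = (f t.1.1 - f t.1.2) / d t.1.1 t.1.2) :
    ∃ G : StoneCech α → ℝ, ∀ z, F z * distExtend d hd z = G (pairFst z) - G (pairSnd z) := by
  set G := stoneCechExtendIcc f (mem_Icc_of_lipschitz_of_eq_zero hd hf hf₀)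
  have hG := continuous_stoneCechExtendIcc (mem_Icc_of_lipschitz_of_eq_zero hd hf hf₀)
  refine ⟨G, congrFun <| stoneCech_hom_ext (hF.mul (continuous_distExtend d hd))
    ((hG.comp continuous_pairFst).sub (hG.comp continuous_pairSnd)) (funext fun t => ?_)⟩
  have hpos : d t.1.1 t.1.2 ≠ 0 := by linarith [(hd _ _ t.2).1]
  simp [G, hFu, div_mul_cancel₀ _ hpos]

lemma abs_mul_distExtend_le_half {x₀ : α} (hf : ∀ x y, |f x - f y| ≤ d x y) (hf₀ : f x₀ = 0)
    (hF : Continuous F)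
    (hFu : ∀ t : OffDiag α, F (stoneCechUnit t) = (f t.1.1 - f t.1.2) / d t.1.1 t.1.2)
    {ζ ζ₀ : StoneCech (OffDiag α)} (h₁ : pairFst ζ₀ = pairFst ζ) (h₂ : pairSnd ζ₀ = pairSnd ζ)
    (h₀ : distExtend d hd ζ₀ = 1 / 2) : |F ζ| * distExtend d hd ζ ≤ 1 / 2 := by
  obtain ⟨G, hG⟩ := exists_mul_distExtend_eq_sub hd hf hf₀ hF hFu
  have hD (z) : 0 ≤ distExtend d hd z := by linarith [(distExtend_mem_Icc d hd z).1]
  calc |F ζ| * distExtend d hd ζ = |F ζ₀| * distExtend d hd ζ₀ := by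
        rw [← abs_of_nonneg (hD ζ), ← abs_mul, hG, ← h₁, ← h₂, ← hG, abs_mul,
          abs_of_nonneg (hD ζ₀)]
    _ ≤ 1 / 2 := by
        rw [h₀]
        linarith [abs_le_one_of_stoneCechUnit_eq_div hd hf hF hFu ζ₀]

lemma one_div_two_mul_distExtend_mem_lipQuotientValues (hd₀ : ∀ x, 0 ≤ d x x) {x₀ : α}
    {E : Set α} (hx₀ : x₀ ∉ E) {ζ : StoneCech (OffDiag α)}
    (hξ : pairFst ζ ∈ closure (stoneCechUnit '' E))
    (hη : pairSnd ζ ∈ closure (stoneCechUnit '' Eᶜ)) :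
    1 / (2 * distExtend d hd ζ) ∈ lipQuotientValues d x₀ ζ := by
  classical
  set f := E.indicator fun _ => (1 / 2 : ℝ)
  have hf (x : α) : f x ∈ Icc (0 : ℝ) (1 / 2) := by
    by_cases hx : x ∈ E <;> simp [f, hx]
  set G := stoneCechExtendIcc f hf
  have hG := continuous_stoneCechExtendIcc hf
  have hD (z) : 0 < distExtend d hd z := by linarith [(distExtend_mem_Icc d hd z).1]
  refine ⟨f, fun z => (G (pairFst z) - G (pairSnd z)) / distExtend d hd z, fun x y => ?_,
    indicator_of_notMem hx₀ _,
    ((hG.comp continuous_pairFst).sub (hG.comp continuous_pairSnd)).div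
      (continuous_distExtend d hd) fun z => (hD z).ne', fun t => by simp [G], ?_⟩
  · rcases eq_or_ne x y with rfl | hxy
    · simpa using hd₀ x
    · obtain ⟨hdxy, -⟩ := hd x y hxy
      obtain ⟨hx0, hx1⟩ := hf x
      obtain ⟨hy0, hy1⟩ := hf y
      exact abs_le.2 ⟨by linarith, by linarith⟩
  · have hGξ : G (pairFst ζ) = 1 / 2 :=
      stoneCechExtendIcc_eq_of_mem_closure hf (fun x hx => indicator_of_mem hx _) hξ
    have hGη : G (pairSnd ζ) = 0 :=
      stoneCechExtendIcc_eq_of_mem_closure hf (fun x hx => indicator_of_notMem hx _) hη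
    dsimp only
    rw [hGξ, hGη, abs_div, abs_of_pos (hD ζ)]
    ring

theorem sSup_lipQuotientValues (hd₀ : ∀ x, 0 ≤ d x x) {x₀ : α} {E : Set α} (hx₀ : x₀ ∉ E)
    {ζ ζ₀ : StoneCech (OffDiag α)} (hξ : pairFst ζ ∈ closure (stoneCechUnit '' E))
    (hη : pairSnd ζ ∈ closure (stoneCechUnit '' Eᶜ)) (h₁ : pairFst ζ₀ = pairFst ζ)
    (h₂ : pairSnd ζ₀ = pairSnd ζ) (h₀ : distExtend d hd ζ₀ = 1 / 2) :
    sSup (lipQuotientValues d x₀ ζ) = 1 / (2 * distExtend d hd ζ) := by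
  refine IsGreatest.csSup_eq ⟨one_div_two_mul_distExtend_mem_lipQuotientValues hd hd₀ hx₀ hξ hη,
    ?_⟩
  rintro _ ⟨f, F, hf, hf₀, hF, hFu, rfl⟩
  have hD : 0 < distExtend d hd ζ := by linarith [(distExtend_mem_Icc d hd ζ).1]
  rw [le_div_iff₀ (by positivity)]
  linarith [abs_mul_distExtend_le_half hd hf hf₀ hF hFu h₁ h₂ h₀]

end LipschitzQuotient

/-- There is a bounded uniformly discrete metric `d` on `ℕ` (with all nonzero
distances in `[1/2, 1]`, hence the induced topology is the discrete one and the Samuel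
compactification is `βℕ`) and points `ξ, η ∈ βℕ` such that: for every
`r ∈ [1/2, 1]` there exists `ζ` in the Stone–Čech compactification of
`\widetilde{ℕ} = {(x,y) : x ≠ y}` whose coordinate pair (under the continuous
extensions `p₁, p₂` of the coordinate projections) is `(ξ, η)` and at which the
continuous extension `D` of the distance function takes the value `r`; consequently
`‖Φ*δ_ζ‖`, the supremum of `|Φf(ζ)|` over the unit ball of `Lip_0(ℕ, d)` (with base
point `1`), equals `1/(2r)`, and so takes every value in `[1/2, 1]`. -/
theorem exists_metric_on_nat_with_all_intermediate_points :
    ∃ d : ℕ → ℕ → ℝ,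
      (∀ x, d x x = 0) ∧
      (∀ x y, d x y = d y x) ∧
      (∀ x y z, d x z ≤ d x y + d y z) ∧
      (∀ x y, x ≠ y → d x y ∈ Set.Icc (1/2 : ℝ) 1) ∧
      ∃ (p₁ p₂ : StoneCech {p : ℕ × ℕ // p.1 ≠ p.2} → StoneCech ℕ)
        (D : StoneCech {p : ℕ × ℕ // p.1 ≠ p.2} → ℝ),
        Continuous p₁ ∧ Continuous p₂ ∧ Continuous D ∧
        (∀ p : {p : ℕ × ℕ // p.1 ≠ p.2},
          p₁ (stoneCechUnit p) = stoneCechUnit p.1.1 ∧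
          p₂ (stoneCechUnit p) = stoneCechUnit p.1.2 ∧
          D (stoneCechUnit p) = d p.1.1 p.1.2) ∧
        ∃ ξ η : StoneCech ℕ, ∀ r ∈ Set.Icc (1/2 : ℝ) 1,
          ∃ ζ : StoneCech {p : ℕ × ℕ // p.1 ≠ p.2},
            p₁ ζ = ξ ∧ p₂ ζ = η ∧ D ζ = r ∧
            sSup {s : ℝ | ∃ (f : ℕ → ℝ) (F : StoneCech {p : ℕ × ℕ // p.1 ≠ p.2} → ℝ),
              (∀ x y, |f x - f y| ≤ d x y) ∧ f 1 = 0 ∧ Continuous F ∧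
              (∀ p : {p : ℕ × ℕ // p.1 ≠ p.2},
                F (stoneCechUnit p) = (f p.1.1 - f p.1.2) / d p.1.1 p.1.2) ∧
              s = |F ζ|} = 1 / (2 * r) := by
  obtain ⟨U, hU⟩ := exists_ultrafilter_forall_mem_exists_color primeExponent
    sUnion_ne_univ_of_missesColor_primeExponent
  have hd (x y : ℕ) (h : x ≠ y) := colorDist_mem_Icc primeExponent ratIcc h
  refine ⟨colorDist primeExponent ratIcc, colorDist_self _ _, colorDist_comm _ _,
    colorDist_triangle _ _, hd, pairFst, pairSnd, distExtend _ hd, continuous_pairFst,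
    continuous_pairSnd, continuous_distExtend _ hd, fun t => ⟨pairFst_stoneCechUnit t,
      pairSnd_stoneCechUnit t, distExtend_stoneCechUnit _ hd t⟩, evenLimit U, oddLimit U,
    fun r hr => ?_⟩
  obtain ⟨ζ, h₁, h₂, rfl⟩ := exists_distExtend_colorDist_eq hU denseRange_ratIcc hr
  obtain ⟨ζ₀, h₁₀, h₂₀, h₀⟩ :=
    exists_distExtend_colorDist_eq hU denseRange_ratIcc (r := 1 / 2) (by norm_num)
  exact ⟨ζ, h₁, h₂, rfl, sSup_lipQuotientValues hd (fun x => (colorDist_self _ _ x).ge)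
    (E := {x | Even x}) (by simp) (h₁ ▸ evenLimit_mem_closure U) (h₂ ▸ oddLimit_mem_closure U)
    (h₁₀.trans h₁.symm) (h₂₀.trans h₂.symm) h₀⟩
end
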